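/- arXiv:2302.09183 — 2 statements merged into one kernel-verified Lean document; each statement's English description precedes it below -/
import Mathlib

section
/- Let γ ∈ [0,1) and set K_γ = 2 + ⌈2γ/(1−γ)⌉. Let M be a randomized mechanism on datasets that satisfies (ε,δ)-differential privacy with respect to add-or-remove-one adjacency. Then the composed mechanism M ∘ P_pre, which first applies the demographic-parity pre-processor P_pre with violation bound γ and then runs M, satisfies (K_γ·ε, K_γ·e^{K_γ·ε}·δ)-differential privacy with respect to add-or-remove-one adjacency. -/
open MeasureTheory

/-- A randomized mechanism `M` (assigning to each dataset a measure on a measurable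
outcome space) satisfies `(ε, δ)`-differential privacy with respect to the adjacency
relation `adj` if for all adjacent datasets and all measurable outcome sets `S`,
`M d S ≤ e^ε · M d' S + δ`. -/
def IsDP {D R : Type*} [MeasurableSpace R] (adj : D → D → Prop)
    (M : D → Measure R) (ε δ : ℝ) : Prop :=
  ∀ d d' : D, adj d d' → ∀ S : Set R, MeasurableSet S →
    M d S ≤ ENNReal.ofReal (Real.exp ε) * M d' S + ENNReal.ofReal δ

/-- Add-or-remove-one adjacency on datasets (finite sets of data points). -/
def Adjacent {X : Type*} [DecidableEq X] (D D' : Finset X) : Prop :=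
  (∃ x ∉ D, D' = insert x D) ∨ (∃ x ∉ D', D = insert x D')

/-- The first `k` elements of a finite set in the fixed linear order. -/
def firstK {X : Type*} [LinearOrder X] (s : Finset X) (k : ℕ) : Finset X :=
  s.filter (fun a => (s.filter (· < a)).card < k)

/-- The number of majority-subgroup points kept when the minority subgroup
has size `m`: `m + ⌊2γm/(1−γ)⌋`. -/
noncomputable def keepCount (γ : ℝ) (m : ℕ) : ℕ := m + ⌊2 * γ * m / (1 - γ)⌋₊

/-- The demographic-parity pre-processor acting inside one label class: keep all
points of the minority sensitive subgroup, and keep only the first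
`m + ⌊2γm/(1−γ)⌋` points (in the fixed order) of the majority subgroup. -/
noncomputable def preprocessLabel {X : Type*} [LinearOrder X] (z : X → Bool) (γ : ℝ)
    (s : Finset X) : Finset X :=
  let A := s.filter (fun a => z a = false)
  let B := s.filter (fun a => z a = true)
  if A.card ≤ B.card then A ∪ firstK B (keepCount γ A.card)
  else B ∪ firstK A (keepCount γ B.card)

/-- The demographic-parity pre-processor `P_pre` with violation bound `γ`:
apply the per-label-class pre-processing to each label class of the dataset. -/
noncomputable def preprocess {X Y : Type*} [LinearOrder X] [DecidableEq Y]
    (z : X → Bool) (label : X → Y) (γ : ℝ) (D : Finset X) : Finset X :=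
  D.filter (fun a => a ∈ preprocessLabel z γ (D.filter (fun b => label b = label a)))

/-- `K_γ = 2 + ⌈2γ/(1−γ)⌉`. -/
noncomputable def Kγ (γ : ℝ) : ℕ := 2 + ⌈2 * γ / (1 - γ)⌉₊
/-!
Adding one point to a dataset changes the output of `P_pre` only inside that point's label class,
and there in at most `K_γ` points. If the point joins the minority subgroup, the minority grows by
one and the majority quota `m + ⌊2γm/(1−γ)⌋` grows by at most `1 + ⌈2γ/(1−γ)⌉ = K_γ − 1`. If it
joins the majority, the first `k` majority points change in at most two places: the new point may
enter and push out at most one old point. So `P_pre` maps adjacent datasets to datasets whose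
symmetric difference has at most `K_γ` points, and group privacy over `k` add-or-remove steps
turns `(ε, δ)` into `(kε, k e^{kε} δ)`.
-/

open Finset
open scoped ENNReal symmDiff

theorem IsDP.comp {D D' R : Type*} [MeasurableSpace R] {adj : D → D → Prop}
    {adj' : D' → D' → Prop} {M : D' → Measure R} {ε δ : ℝ} (hM : IsDP adj' M ε δ)
    {f : D → D'} (hf : ∀ d d', adj d d' → adj' (f d) (f d')) :
    IsDP adj (fun d => M (f d)) ε δ :=
  fun d d' h => hM (f d) (f d') (hf d d' h)

theorem adjacent_symmDiff_singleton {X : Type*} [DecidableEq X] (s : Finset X) (x : X) :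
    Adjacent s (s ∆ {x}) := by
  by_cases hx : x ∈ s
  · rw [symmDiff_comm, symmDiff_of_le (singleton_subset_iff.2 hx), sdiff_singleton_eq_erase]
    exact Or.inr ⟨x, notMem_erase x s, (insert_erase hx).symm⟩
  · refine Or.inl ⟨x, hx, ?_⟩
    rw [symmDiff_eq_union (disjoint_singleton_right.2 hx), union_singleton]

theorem group_privacy_step {ε δ : ℝ} (hε : 0 ≤ ε) (hδ : 0 ≤ δ) {k : ℕ} {a b : ℝ≥0∞}
    (h : a ≤ ENNReal.ofReal (Real.exp (k * ε)) * b
      + ENNReal.ofReal (k * Real.exp (k * ε) * δ)) :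
    ENNReal.ofReal (Real.exp ε) * a + ENNReal.ofReal δ ≤
      ENNReal.ofReal (Real.exp ((k + 1 : ℕ) * ε)) * b
        + ENNReal.ofReal ((k + 1 : ℕ) * Real.exp ((k + 1 : ℕ) * ε) * δ) := by
  have hexp : Real.exp ε * Real.exp (k * ε) = Real.exp ((k + 1 : ℕ) * ε) := by
    rw [← Real.exp_add]; push_cast; ring_nf
  have hδ_le : δ ≤ Real.exp ((k + 1 : ℕ) * ε) * δ :=
    le_mul_of_one_le_left hδ (Real.one_le_exp (by positivity))
  calc ENNReal.ofReal (Real.exp ε) * a + ENNReal.ofReal δ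
      ≤ ENNReal.ofReal (Real.exp ε) * (ENNReal.ofReal (Real.exp (k * ε)) * b
          + ENNReal.ofReal (k * Real.exp (k * ε) * δ)) + ENNReal.ofReal δ := by gcongr
    _ = ENNReal.ofReal (Real.exp ((k + 1 : ℕ) * ε)) * b
          + ENNReal.ofReal (Real.exp ε * (k * Real.exp (k * ε) * δ) + δ) := by
      rw [mul_add, ← mul_assoc, ← ENNReal.ofReal_mul (Real.exp_nonneg ε), hexp, add_assoc,
        ← ENNReal.ofReal_mul (Real.exp_nonneg ε), ENNReal.ofReal_add (by positivity) hδ]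
    _ ≤ _ := by
      gcongr
      calc Real.exp ε * (k * Real.exp (k * ε) * δ) + δ
          = k * Real.exp ((k + 1 : ℕ) * ε) * δ + δ := by rw [← hexp]; ring
        _ ≤ _ := by push_cast at hδ_le ⊢; linarith

theorem IsDP.group_privacy {X R : Type*} [DecidableEq X] [MeasurableSpace R]
    {M : Finset X → Measure R} {ε δ : ℝ} (hM : IsDP Adjacent M ε δ) (hε : 0 ≤ ε) (hδ : 0 ≤ δ)
    (k : ℕ) : IsDP (fun s t : Finset X => #(s ∆ t) ≤ k) M (k * ε) (k * Real.exp (k * ε) * δ) := by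
  intro s t hst S hS
  induction k generalizing s with
  | zero =>
    obtain rfl : s = t := symmDiff_eq_empty.1 (card_eq_zero.1 (Nat.le_zero.1 hst))
    simp
  | succ k ih =>
    obtain rfl | hne := eq_or_ne s t
    · exact le_add_right (le_mul_of_one_le_left' (ENNReal.one_le_ofReal.2
        (Real.one_le_exp (by positivity))))
    obtain ⟨x, hx⟩ := symmDiff_nonempty.2 hne
    have hdist : #(s ∆ {x} ∆ t) ≤ k := by
      rw [symmDiff_right_comm, symmDiff_comm, symmDiff_of_le (singleton_subset_iff.2 hx),
        sdiff_singleton_eq_erase, card_erase_of_mem hx]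
      omega
    exact (hM s _ (adjacent_symmDiff_singleton s x) S hS).trans
      (group_privacy_step hε hδ (ih _ hdist))

theorem sup_symmDiff_sup_le {α : Type*} [GeneralizedBooleanAlgebra α] (a b c d : α) :
    (a ⊔ b) ∆ (c ⊔ d) ≤ a ∆ c ⊔ b ∆ d :=
  symmDiff_le
    (sup_le
      ((le_symmDiff_sup_right a c).trans
        (sup_le (le_sup_of_le_right le_sup_left) (le_sup_of_le_left le_sup_left)))
      ((le_symmDiff_sup_right b d).trans
        (sup_le (le_sup_of_le_right le_sup_right) (le_sup_of_le_left le_sup_right))))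
    (sup_le
      ((le_symmDiff_sup_left a c).trans
        (sup_le (le_sup_of_le_right le_sup_left) (le_sup_of_le_left le_sup_left)))
      ((le_symmDiff_sup_left b d).trans
        (sup_le (le_sup_of_le_right le_sup_right) (le_sup_of_le_left le_sup_right))))

theorem Nat.floor_add_le_floor_add_ceil {R : Type*} [Semiring R] [LinearOrder R]
    [IsStrictOrderedRing R] [FloorSemiring R] {a : R} (ha : 0 ≤ a) (b : R) :
    ⌊a + b⌋₊ ≤ ⌊a⌋₊ + ⌈b⌉₊ :=
  calc ⌊a + b⌋₊ ≤ ⌊a + (⌈b⌉₊ : R)⌋₊ := Nat.floor_le_floor (by gcongr; exact Nat.le_ceil b)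
    _ = ⌊a⌋₊ + ⌈b⌉₊ := Nat.floor_add_natCast ha _

section FirstK

variable {X : Type*} [LinearOrder X] {t : Finset X} {a b x : X} {k k' : ℕ}

def rank (t : Finset X) (a : X) : ℕ := #(t.filter (· < a))

theorem mem_firstK : a ∈ firstK t k ↔ a ∈ t ∧ rank t a < k := mem_filter

theorem firstK_subset (t : Finset X) (k : ℕ) : firstK t k ⊆ t := filter_subset _ _

theorem rank_lt_rank (ha : a ∈ t) (hab : a < b) : rank t a < rank t b :=
  card_lt_card ⟨monotone_filter_right t fun _ _ hc => hc.trans hab,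
    fun h => lt_irrefl a (mem_filter.1 (h (mem_filter.2 ⟨ha, hab⟩))).2⟩

theorem rank_injOn : Set.InjOn (rank t) t := by
  intro a ha b hb h
  rcases lt_trichotomy a b with hab | rfl | hba
  · exact absurd h (rank_lt_rank ha hab).ne
  · rfl
  · exact absurd h (rank_lt_rank hb hba).ne'

theorem rank_lt_card (ha : a ∈ t) : rank t a < #t :=
  card_lt_card (filter_ssubset.2 ⟨a, ha, lt_irrefl a⟩)

theorem rank_le_rank_insert : rank t a ≤ rank (insert x t) a :=
  card_le_card (filter_subset_filter _ (subset_insert x t))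

theorem rank_insert_le : rank (insert x t) a ≤ rank t a + 1 := by
  unfold rank
  rw [filter_insert]
  split
  · exact card_insert_le _ _
  · exact Nat.le_succ _

theorem firstK_eq_self (h : #t ≤ k) : firstK t k = t :=
  (firstK_subset t k).antisymm fun _ ha => mem_firstK.2 ⟨ha, (rank_lt_card ha).trans_le h⟩

theorem firstK_mono (h : k ≤ k') : firstK t k ⊆ firstK t k' := fun _ ha =>
  mem_firstK.2 ⟨(mem_firstK.1 ha).1, (mem_firstK.1 ha).2.trans_le h⟩

theorem card_firstK_symmDiff_firstK_le (h : k ≤ k') : #(firstK t k ∆ firstK t k') ≤ k' - k := by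
  rw [symmDiff_of_le (firstK_mono h), ← Nat.card_Ico]
  refine card_le_card_of_injOn (rank t) (fun a ha => ?_)
    (rank_injOn.mono fun a ha => firstK_subset t k' (mem_sdiff.1 ha).1)
  rw [mem_coe, mem_sdiff, mem_firstK, mem_firstK] at ha
  rw [mem_coe, mem_Ico]
  exact ⟨not_lt.1 fun hk => ha.2 ⟨ha.1.1, hk⟩, ha.1.2⟩

theorem card_firstK_insert_symmDiff_le : #(firstK (insert x t) k ∆ firstK t k) ≤ 2 := by
  have h_new : firstK (insert x t) k \ firstK t k ⊆ {x} := by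
    intro a ha
    rw [mem_sdiff, mem_firstK, mem_firstK, mem_insert] at ha
    rcases ha with ⟨⟨rfl | hat, hk⟩, hnot⟩
    · exact mem_singleton_self a
    · exact absurd ⟨hat, rank_le_rank_insert.trans_lt hk⟩ hnot
  have h_old : #(firstK t k \ firstK (insert x t) k) ≤ 1 := by
    have h_rank : ∀ a ∈ firstK t k \ firstK (insert x t) k, a ∈ t ∧ rank t a + 1 = k := by
      intro a ha
      rw [mem_sdiff, mem_firstK, mem_firstK] at ha
      have h_ge : k ≤ rank (insert x t) a := not_lt.1 fun hk => ha.2 ⟨mem_insert_of_mem ha.1.1, hk⟩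
      have := rank_insert_le (t := t) (x := x) (a := a)
      exact ⟨ha.1.1, by omega⟩
    refine card_le_one.2 fun a ha b hb => ?_
    obtain ⟨hat, hak⟩ := h_rank a ha
    obtain ⟨hbt, hbk⟩ := h_rank b hb
    exact rank_injOn hat hbt (by omega)
  calc #(firstK (insert x t) k ∆ firstK t k)
      ≤ #(firstK (insert x t) k \ firstK t k) + #(firstK t k \ firstK (insert x t) k) :=
        card_union_le _ _
    _ ≤ 1 + 1 := add_le_add ((card_le_card h_new).trans_eq (card_singleton x)) h_old

end FirstK

section KeepCount

variable {γ : ℝ}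

theorem le_keepCount (γ : ℝ) (m : ℕ) : m ≤ keepCount γ m := Nat.le_add_right _ _

theorem keepCount_mono (hγ0 : 0 ≤ γ) (hγ1 : γ < 1) : Monotone (keepCount γ) := by
  intro m n hmn
  have h1γ : 0 < 1 - γ := sub_pos.2 hγ1
  unfold keepCount
  gcongr

theorem keepCount_succ_le (hγ0 : 0 ≤ γ) (hγ1 : γ < 1) (m : ℕ) :
    keepCount γ (m + 1) ≤ keepCount γ m + (Kγ γ - 1) := by
  have h1γ : 0 < 1 - γ := sub_pos.2 hγ1
  have hsplit : 2 * γ * ((m + 1 : ℕ) : ℝ) / (1 - γ) = 2 * γ * m / (1 - γ) + 2 * γ / (1 - γ) := by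
    push_cast; ring
  have := Nat.floor_add_le_floor_add_ceil (by positivity : 0 ≤ 2 * γ * m / (1 - γ))
    (2 * γ / (1 - γ))
  unfold keepCount Kγ
  rw [hsplit]
  omega

end KeepCount

section TrimMajority

variable {X : Type*} [LinearOrder X] {γ : ℝ} {A B : Finset X} {x : X}

noncomputable def trimMajority (γ : ℝ) (A B : Finset X) : Finset X :=
  if #A ≤ #B then A ∪ firstK B (keepCount γ #A) else B ∪ firstK A (keepCount γ #B)

theorem trimMajority_of_card_le (h : #A ≤ #B) :
    trimMajority γ A B = A ∪ firstK B (keepCount γ #A) := if_pos h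

theorem trimMajority_comm (γ : ℝ) (A B : Finset X) : trimMajority γ A B = trimMajority γ B A := by
  unfold trimMajority
  by_cases hAB : #A ≤ #B <;> by_cases hBA : #B ≤ #A <;> simp only [hAB, hBA, if_true, if_false]
  · rw [firstK_eq_self (hBA.trans (le_keepCount γ _)),
      firstK_eq_self (hAB.trans (le_keepCount γ _)), union_comm]
  · omega

theorem trimMajority_of_card_le' (h : #B ≤ #A) :
    trimMajority γ A B = B ∪ firstK A (keepCount γ #B) := by
  rw [trimMajority_comm]; exact if_pos h

theorem trimMajority_subset (γ : ℝ) (A B : Finset X) : trimMajority γ A B ⊆ A ∪ B := by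
  unfold trimMajority
  split
  · exact union_subset_union_right (firstK_subset _ _)
  · exact union_subset subset_union_right ((firstK_subset _ _).trans subset_union_left)

theorem card_insert_symmDiff_le (A : Finset X) (x : X) : #(insert x A ∆ A) ≤ 1 := by
  refine (card_le_card fun a ha => ?_).trans (card_singleton x).le
  rw [mem_symmDiff, mem_insert] at ha
  rw [mem_singleton]
  tauto

theorem card_trimMajority_insert_symmDiff_le (hγ0 : 0 ≤ γ) (hγ1 : γ < 1) (hx : x ∉ A) :
    #(trimMajority γ (insert x A) B ∆ trimMajority γ A B) ≤ Kγ γ := by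
  have hK : 2 ≤ Kγ γ := Nat.le_add_right 2 _
  rcases le_or_gt #B #A with hBA | hAB
  · rw [trimMajority_of_card_le' hBA,
      trimMajority_of_card_le' (hBA.trans (card_le_card (subset_insert x A)))]
    calc #((B ∪ firstK (insert x A) (keepCount γ #B)) ∆ (B ∪ firstK A (keepCount γ #B)))
        ≤ #(B ∆ B ∪ firstK (insert x A) (keepCount γ #B) ∆ firstK A (keepCount γ #B)) :=
          card_le_card (sup_symmDiff_sup_le _ _ _ _)
      _ ≤ 2 := by
          rw [symmDiff_self, bot_eq_empty, empty_union]
          exact card_firstK_insert_symmDiff_le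
      _ ≤ Kγ γ := hK
  · have hcard : #(insert x A) = #A + 1 := card_insert_of_notMem hx
    rw [trimMajority_of_card_le (hcard ▸ hAB), trimMajority_of_card_le hAB.le, hcard]
    have hquota := keepCount_succ_le hγ0 hγ1 #A
    have hfirst := card_firstK_symmDiff_firstK_le (t := B)
      (keepCount_mono hγ0 hγ1 (Nat.le_add_right #A 1))
    rw [symmDiff_comm] at hfirst
    calc #((insert x A ∪ firstK B (keepCount γ (#A + 1))) ∆ (A ∪ firstK B (keepCount γ #A)))
        ≤ #(insert x A ∆ A ∪ firstK B (keepCount γ (#A + 1)) ∆ firstK B (keepCount γ #A)) :=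
          card_le_card (sup_symmDiff_sup_le _ _ _ _)
      _ ≤ #(insert x A ∆ A) + #(firstK B (keepCount γ (#A + 1)) ∆ firstK B (keepCount γ #A)) :=
          card_union_le _ _
      _ ≤ Kγ γ := by have := card_insert_symmDiff_le A x; omega

end TrimMajority

section Preprocess

variable {X Y : Type*} [LinearOrder X] [DecidableEq Y] {γ : ℝ}

theorem preprocessLabel_eq_trimMajority (z : X → Bool) (γ : ℝ) (s : Finset X) :
    preprocessLabel z γ s = trimMajority γ {a ∈ s | z a = false} {a ∈ s | z a = true} := rfl

theorem preprocessLabel_subset (z : X → Bool) (γ : ℝ) (s : Finset X) :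
    preprocessLabel z γ s ⊆ s :=
  (trimMajority_subset γ _ _).trans (union_subset (filter_subset _ _) (filter_subset _ _))

theorem card_preprocessLabel_insert_symmDiff_le (z : X → Bool) (hγ0 : 0 ≤ γ) (hγ1 : γ < 1)
    {s : Finset X} {x : X} (hx : x ∉ s) :
    #(preprocessLabel z γ (insert x s) ∆ preprocessLabel z γ s) ≤ Kγ γ := by
  have hxf : ∀ b, x ∉ {a ∈ s | z a = b} := fun b h => hx (mem_filter.1 h).1
  simp only [preprocessLabel_eq_trimMajority, filter_insert]
  cases z x with
  | false =>
    simpa using card_trimMajority_insert_symmDiff_le hγ0 hγ1 (hxf false)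
  | true =>
    simpa [trimMajority_comm γ {a ∈ s | z a = false}] using
      card_trimMajority_insert_symmDiff_le hγ0 hγ1 (hxf true)

theorem mem_preprocess {z : X → Bool} {label : X → Y} {D : Finset X} {a : X} :
    a ∈ preprocess z label γ D ↔ a ∈ preprocessLabel z γ {b ∈ D | label b = label a} :=
  mem_filter.trans
    ⟨And.right, fun h => ⟨(mem_filter.1 (preprocessLabel_subset z γ _ h)).1, h⟩⟩

theorem card_preprocess_insert_symmDiff_le (z : X → Bool) (label : X → Y) (hγ0 : 0 ≤ γ)
    (hγ1 : γ < 1) {D : Finset X} {x : X} (hx : x ∉ D) :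
    #(preprocess z label γ (insert x D) ∆ preprocess z label γ D) ≤ Kγ γ := by
  refine (card_le_card fun a ha => ?_).trans
    (card_preprocessLabel_insert_symmDiff_le z hγ0 hγ1 (s := {b ∈ D | label b = label x})
      fun h => hx (mem_filter.1 h).1)
  rw [mem_symmDiff, mem_preprocess, mem_preprocess, filter_insert] at ha
  by_cases hl : label a = label x
  · rwa [hl, if_pos rfl, ← mem_symmDiff] at ha
  · rw [if_neg (Ne.symm hl)] at ha
    tauto

end Preprocess

/-- **Privacy cost of fairness pre-processing.** If `M` is `(ε, δ)`-differentially
private (add-or-remove-one adjacency), then `M ∘ P_pre`, with `P_pre` the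
demographic-parity pre-processor with violation bound `γ ∈ [0,1)`, is
`(K_γ ε, K_γ e^{K_γ ε} δ)`-differentially private, where `K_γ = 2 + ⌈2γ/(1−γ)⌉`. -/
theorem preprocess_privacy {X Y R : Type*} [LinearOrder X] [DecidableEq Y]
    [MeasurableSpace R] (z : X → Bool) (label : X → Y)
    (γ : ℝ) (hγ0 : 0 ≤ γ) (hγ1 : γ < 1)
    (ε δ : ℝ) (hε : 0 ≤ ε) (hδ : 0 ≤ δ)
    (M : Finset X → Measure R) (hM : IsDP Adjacent M ε δ) :
    IsDP Adjacent (fun D => M (preprocess z label γ D))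
      ((Kγ γ : ℝ) * ε) ((Kγ γ : ℝ) * Real.exp ((Kγ γ : ℝ) * ε) * δ) := by
  refine (hM.group_privacy hε hδ (Kγ γ)).comp ?_
  rintro D D' (⟨x, hx, rfl⟩ | ⟨x, hx, rfl⟩)
  · rw [symmDiff_comm]
    exact card_preprocess_insert_symmDiff_le z label hγ0 hγ1 hx
  · exact card_preprocess_insert_symmDiff_le z label hγ0 hγ1 hx
end

section
/- Let γ ∈ [0,1) and set K_γ = 2 + ⌈2γ/(1−γ)⌉. For any dataset D and any single triple x* = (x, z, y), letting D' = D + {x*} be the dataset obtained by adding x*, the multiset symmetric difference between P_pre(D) and P_pre(D') has cardinality at most K_γ; in particular P_pre(D') can be obtained from P_pre(D) by at most K_γ additions or removals of single points. -/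
/-!
Only the label class of the new point `x` changes, so it suffices to compare the
pre-processor on one class before and after inserting `x` into one of its subgroups `A`.
If `A` stays the minority, `x` is kept and the majority quota `keepCount` grows by at most
`1 + ⌈2γ/(1-γ)⌉`. If `A` was tied with the other subgroup, everything was kept before and `A`
becomes the majority, losing at most one point. If `A` was already the majority, its kept
prefix of fixed length gains at most `x` and loses at most one point.
-/

open Finset
open scoped symmDiff

namespace DemographicParity

variable {X : Type*} [LinearOrder X]

def rank (s : Finset X) (a : X) : ℕ := #(s.filter (· < a))

lemma mem_firstK {s : Finset X} {k : ℕ} {a : X} : a ∈ firstK s k ↔ a ∈ s ∧ rank s a < k :=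
  mem_filter

lemma firstK_subset (s : Finset X) (k : ℕ) : firstK s k ⊆ s := filter_subset _ _

lemma firstK_mono (s : Finset X) {k l : ℕ} (h : k ≤ l) : firstK s k ⊆ firstK s l :=
  fun _ ha => mem_firstK.2 ⟨(mem_firstK.1 ha).1, (mem_firstK.1 ha).2.trans_le h⟩

lemma rank_lt_card {s : Finset X} {a : X} (ha : a ∈ s) : rank s a < #s :=
  card_lt_card (filter_ssubset.2 ⟨a, ha, lt_irrefl a⟩)

lemma firstK_eq_self {s : Finset X} {k : ℕ} (h : #s ≤ k) : firstK s k = s :=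
  filter_true_of_mem fun _ ha => (rank_lt_card ha).trans_le h

lemma rank_strictMonoOn (s : Finset X) : StrictMonoOn (rank s) s := by
  intro a ha b _ hab
  refine card_lt_card ⟨monotone_filter_right s fun _ _ hc => hc.trans hab, fun h => ?_⟩
  exact lt_irrefl a (mem_filter.1 (h (mem_filter.2 ⟨ha, hab⟩))).2

lemma rank_le_rank_insert (s : Finset X) (x a : X) : rank s a ≤ rank (insert x s) a :=
  card_le_card (filter_subset_filter _ (subset_insert x s))

lemma rank_insert_le (s : Finset X) (x a : X) : rank (insert x s) a ≤ rank s a + 1 := by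
  unfold rank
  rw [filter_insert]
  split_ifs
  · exact card_insert_le _ _
  · exact Nat.le_succ _

lemma card_filter_rank_mem_Ico_le (s : Finset X) (k l : ℕ) :
    #(s.filter fun a => rank s a ∈ Ico k l) ≤ l - k := by
  simpa using card_le_card_of_injOn (t := Ico k l) (rank s) (fun a ha => (mem_filter.1 ha).2)
    ((rank_strictMonoOn s).injOn.mono (coe_subset.2 (filter_subset _ s)))

lemma card_symmDiff_triangle (s t u : Finset X) : #(s ∆ u) ≤ #(s ∆ t) + #(t ∆ u) :=
  (card_le_card (symmDiff_triangle s t u)).trans (card_union_le _ _)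

lemma card_union_symmDiff_union_le (s t u v : Finset X) :
    #((s ∪ t) ∆ (u ∪ v)) ≤ #(s ∆ u) + #(t ∆ v) := by
  refine (card_le_card fun a => ?_).trans (card_union_le _ _)
  simp only [mem_symmDiff, mem_union]
  tauto

lemma card_symmDiff_insert_le (s : Finset X) (x : X) : #(s ∆ insert x s) ≤ 1 := by
  rw [symmDiff_of_le (subset_insert x s)]
  exact card_le_one.2 fun a ha b hb => by
    simp only [mem_sdiff, mem_insert] at ha hb
    rw [ha.1.resolve_right ha.2, hb.1.resolve_right hb.2]

lemma card_firstK_symmDiff_firstK_le (s : Finset X) {k l : ℕ} (h : k ≤ l) :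
    #(firstK s k ∆ firstK s l) ≤ l - k := by
  rw [symmDiff_of_le (firstK_mono s h)]
  refine (card_le_card fun a ha => ?_).trans (card_filter_rank_mem_Ico_le s k l)
  simp only [mem_sdiff, mem_firstK, mem_filter, mem_Ico] at ha ⊢
  exact ⟨ha.1.1, not_lt.1 fun h' => ha.2 ⟨ha.1.1, h'⟩, ha.1.2⟩

lemma card_symmDiff_firstK_le (s : Finset X) (k : ℕ) : #(s ∆ firstK s k) ≤ #s - k := by
  rw [symmDiff_of_ge (firstK_subset s k)]
  refine (card_le_card fun a ha => ?_).trans (card_filter_rank_mem_Ico_le s k #s)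
  simp only [mem_sdiff, mem_firstK, mem_filter, mem_Ico] at ha ⊢
  exact ⟨ha.1, not_lt.1 fun h' => ha.2 ⟨ha.1, h'⟩, rank_lt_card ha.1⟩

/-- Inserting a point pushes at most one old point out of the first `k`. -/
lemma card_firstK_symmDiff_firstK_insert_le (s : Finset X) (x : X) (k : ℕ) :
    #(firstK s k ∆ firstK (insert x s) k) ≤ 2 := by
  have h_removed : firstK s k \ firstK (insert x s) k ⊆
      (insert x s).filter fun a => rank (insert x s) a ∈ Ico k (k + 1) := by
    intro a ha
    simp only [mem_sdiff, mem_firstK, mem_filter, mem_Ico, mem_insert] at ha ⊢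
    have := rank_insert_le s x a
    exact ⟨Or.inr ha.1.1, not_lt.1 fun h => ha.2 ⟨Or.inr ha.1.1, h⟩, by omega⟩
  have h_added : firstK (insert x s) k \ firstK s k ⊆ {x} := by
    intro a ha
    simp only [mem_sdiff, mem_firstK, mem_insert, mem_singleton] at ha ⊢
    refine ha.1.1.resolve_right fun has => ha.2 ⟨has, ?_⟩
    exact (rank_le_rank_insert s x a).trans_lt ha.1.2
  calc #(firstK s k ∆ firstK (insert x s) k)
      ≤ #(firstK s k \ firstK (insert x s) k) + #(firstK (insert x s) k \ firstK s k) :=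
        card_union_le _ _
    _ ≤ 1 + 1 := by
        gcongr
        · simpa using (card_le_card h_removed).trans (card_filter_rank_mem_Ico_le _ k (k + 1))
        · simpa using card_le_card h_added

section KeepCount

variable {γ : ℝ}

lemma keepCount_mono (hγ0 : 0 ≤ γ) (hγ1 : γ < 1) : Monotone (keepCount γ) := by
  intro m n h
  have hγ : 0 ≤ 2 * γ := by linarith
  have hdiv : 2 * γ * m / (1 - γ) ≤ 2 * γ * n / (1 - γ) :=
    div_le_div_of_nonneg_right (mul_le_mul_of_nonneg_left (by exact_mod_cast h) hγ)
      (by linarith)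
  exact add_le_add h (Nat.floor_le_floor hdiv)

lemma keepCount_succ_le (hγ0 : 0 ≤ γ) (hγ1 : γ < 1) (m : ℕ) :
    keepCount γ (m + 1) ≤ keepCount γ m + 1 + ⌈2 * γ / (1 - γ)⌉₊ := by
  have hpos : 0 < 1 - γ := by linarith
  have hfloor : ⌊2 * γ * (m + 1 : ℕ) / (1 - γ)⌋₊ ≤ ⌊2 * γ * m / (1 - γ)⌋₊ + ⌈2 * γ / (1 - γ)⌉₊ :=
    calc ⌊2 * γ * (m + 1 : ℕ) / (1 - γ)⌋₊
        = ⌊2 * γ * m / (1 - γ) + 2 * γ / (1 - γ)⌋₊ := by push_cast; ring_nf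
      _ ≤ ⌊2 * γ * m / (1 - γ) + ⌈2 * γ / (1 - γ)⌉₊⌋₊ :=
          Nat.floor_le_floor (add_le_add_right (Nat.le_ceil _) _)
      _ = ⌊2 * γ * m / (1 - γ)⌋₊ + ⌈2 * γ / (1 - γ)⌉₊ := Nat.floor_add_natCast (by positivity) _
  unfold keepCount
  omega

end KeepCount

section KeepBalanced

variable {γ : ℝ} {A B : Finset X}

/-- `preprocessLabel` as a function of the two sensitive subgroups; unlike `preprocessLabel`
it is visibly symmetric in them (`keepBalanced_comm`), so only insertions into `A` need study. -/
noncomputable def keepBalanced (γ : ℝ) (A B : Finset X) : Finset X :=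
  if #A ≤ #B then A ∪ firstK B (keepCount γ #A) else B ∪ firstK A (keepCount γ #B)

lemma preprocessLabel_eq_keepBalanced (z : X → Bool) (γ : ℝ) (s : Finset X) :
    preprocessLabel z γ s = keepBalanced γ (s.filter (z · = false)) (s.filter (z · = true)) :=
  rfl

lemma keepBalanced_of_card_eq (h : #A = #B) : keepBalanced γ A B = A ∪ B := by
  rw [keepBalanced, if_pos h.le, firstK_eq_self (h ▸ Nat.le_add_right _ _)]

lemma keepBalanced_comm (A B : Finset X) : keepBalanced γ A B = keepBalanced γ B A := by
  rcases lt_trichotomy #A #B with h | h | h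
  · rw [keepBalanced, keepBalanced, if_pos h.le, if_neg h.not_ge]
  · rw [keepBalanced_of_card_eq h, keepBalanced_of_card_eq h.symm, union_comm]
  · rw [keepBalanced, keepBalanced, if_neg h.not_ge, if_pos h.le]

lemma keepBalanced_subset (γ : ℝ) (A B : Finset X) : keepBalanced γ A B ⊆ A ∪ B := by
  unfold keepBalanced
  split_ifs
  · exact union_subset_union_right (firstK_subset _ _)
  · exact union_comm A B ▸ union_subset_union_right (firstK_subset _ _)

lemma card_keepBalanced_symmDiff_insert_le (hγ0 : 0 ≤ γ) (hγ1 : γ < 1) {x : X} (hx : x ∉ A) :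
    #(keepBalanced γ A B ∆ keepBalanced γ (insert x A) B) ≤ 2 + ⌈2 * γ / (1 - γ)⌉₊ := by
  have hcard : #(insert x A) = #A + 1 := card_insert_of_notMem hx
  have hA := card_symmDiff_insert_le A x
  rcases lt_trichotomy #A #B with h | h | h
  · rw [keepBalanced, keepBalanced, if_pos h.le, if_pos (hcard ▸ h)]
    have hB := card_firstK_symmDiff_firstK_le B (keepCount_mono hγ0 hγ1 (Nat.le_add_right #A 1))
    have := keepCount_succ_le hγ0 hγ1 #A
    have := card_union_symmDiff_union_le A (firstK B (keepCount γ #A)) (insert x A)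
      (firstK B (keepCount γ #(insert x A)))
    rw [hcard] at *
    omega
  · rw [keepBalanced_of_card_eq h, keepBalanced, if_neg (by omega), union_comm]
    have := card_union_symmDiff_union_le B A B (firstK (insert x A) (keepCount γ #B))
    have := card_symmDiff_triangle A (insert x A) (firstK (insert x A) (keepCount γ #B))
    have := card_symmDiff_firstK_le (insert x A) (keepCount γ #B)
    have : #B ≤ keepCount γ #B := Nat.le_add_right _ _
    simp only [symmDiff_self, bot_eq_empty, card_empty] at *
    omega
  · rw [keepBalanced, keepBalanced, if_neg h.not_ge, if_neg (by omega)]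
    have := card_union_symmDiff_union_le B (firstK A (keepCount γ #B)) B
      (firstK (insert x A) (keepCount γ #B))
    have := card_firstK_symmDiff_firstK_insert_le A x (keepCount γ #B)
    simp only [symmDiff_self, bot_eq_empty, card_empty] at *
    omega

end KeepBalanced

lemma preprocessLabel_subset (z : X → Bool) (γ : ℝ) (s : Finset X) : preprocessLabel z γ s ⊆ s :=
  (keepBalanced_subset γ _ _).trans (union_subset (filter_subset _ s) (filter_subset _ s))

lemma card_preprocessLabel_symmDiff_insert_le (z : X → Bool) {γ : ℝ} (hγ0 : 0 ≤ γ) (hγ1 : γ < 1)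
    {s : Finset X} {x : X} (hx : x ∉ s) :
    #(preprocessLabel z γ s ∆ preprocessLabel z γ (insert x s)) ≤ 2 + ⌈2 * γ / (1 - γ)⌉₊ := by
  have hx' (b : Bool) : x ∉ s.filter (z · = b) := fun h => hx (mem_filter.1 h).1
  simp only [preprocessLabel_eq_keepBalanced, filter_insert]
  cases hz : z x
  · simpa using card_keepBalanced_symmDiff_insert_le hγ0 hγ1 (B := s.filter (z · = true))
      (hx' false)
  · simpa [keepBalanced_comm (s.filter (z · = false))]
      using card_keepBalanced_symmDiff_insert_le hγ0 hγ1 (B := s.filter (z · = false)) (hx' true)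

section LabelClasses

variable {Y : Type*} [DecidableEq Y] (z : X → Bool) (label : X → Y) (γ : ℝ)

lemma mem_preprocess {D : Finset X} {a : X} :
    a ∈ preprocess z label γ D ↔ a ∈ preprocessLabel z γ (D.filter (label · = label a)) :=
  mem_filter.trans <| and_iff_right_of_imp fun h =>
    filter_subset _ D (preprocessLabel_subset z γ _ h)

lemma preprocess_symmDiff_insert_subset (D : Finset X) (x : X) :
    preprocess z label γ D ∆ preprocess z label γ (insert x D) ⊆
      preprocessLabel z γ (D.filter (label · = label x)) ∆
        preprocessLabel z γ (insert x (D.filter (label · = label x))) := by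
  intro a ha
  by_cases hl : label a = label x
  · simpa [mem_symmDiff, mem_preprocess, filter_insert, hl] using ha
  · simp [mem_symmDiff, mem_preprocess, filter_insert, Ne.symm hl] at ha

end LabelClasses

end DemographicParity

/-- **Sensitivity of the demographic-parity pre-processor.** Adding a single data
point `x` to a dataset `D` changes the output of `P_pre` by at most
`K_γ = 2 + ⌈2γ/(1−γ)⌉` points: the symmetric difference between `P_pre(D)` and
`P_pre(D ∪ {x})` has cardinality at most `K_γ`. -/
theorem preprocess_sensitivity {X Y : Type*} [LinearOrder X] [DecidableEq Y]
    (z : X → Bool) (label : X → Y) (γ : ℝ) (hγ0 : 0 ≤ γ) (hγ1 : γ < 1)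
    (D : Finset X) (x : X) (hx : x ∉ D) :
    ((preprocess z label γ D \ preprocess z label γ (insert x D)) ∪
      (preprocess z label γ (insert x D) \ preprocess z label γ D)).card
      ≤ 2 + ⌈2 * γ / (1 - γ)⌉₊ := by
  have hx_class : x ∉ D.filter (label · = label x) := fun h => hx (mem_filter.1 h).1
  exact (card_le_card (DemographicParity.preprocess_symmDiff_insert_subset z label γ D x)).trans
    (DemographicParity.card_preprocessLabel_symmDiff_insert_le z hγ0 hγ1 hx_class)
end
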